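/- Let $R$ be a commutative Noetherian local ring with maximal ideal $\mathfrak{m}$, $I, J$ ideals, and $M$ an Artinian $R$-module. If $M$ is $I$-separated, i.e. $\bigcap_{t>0} I^t M = 0$, then there exists a positive integer $n$ with $I^n M = 0$, and consequently $\mathfrak{F}^I_{i,J}(M) \cong H^J_i(M)$ for all $i$. -/

import Mathlib

open CategoryTheory CategoryTheory.Limits

noncomputable section

namespace FLH

variable (R : Type) [CommRing R]

/-- The inverse system `… → R/J^{t+1} → R/J^t → …` over `ℕᵒᵖ`. -/
def quotPowDiagram (J : Ideal R) : ℕᵒᵖ ⥤ ModuleCat R :=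
  Functor.ofOpSequence
    (X := fun t => ModuleCat.of R (R ⧸ (J ^ t : Ideal R)))
    fun t => ModuleCat.ofHom
      (Submodule.mapQ (J ^ (t + 1)) (J ^ t) LinearMap.id
        (fun _ hx => Ideal.pow_le_pow_right (Nat.le_succ t) hx))

/-- The `i`-th local homology functor `H^J_i(-) = lim_t Tor_i(R/J^t, -)`. -/
def localHomologyFunctor (J : Ideal R) (i : ℕ) : ModuleCat R ⥤ ModuleCat R :=
  (Tor (ModuleCat R) i).flip ⋙
    (Functor.whiskeringLeft ℕᵒᵖ (ModuleCat R) (ModuleCat R)).obj (quotPowDiagram R J) ⋙ lim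

/-- The direct system `0 :_M I ⊆ 0 :_M I² ⊆ …` over `ℕ`. -/
def torsionDiagram (I : Ideal R) (M : Type) [AddCommGroup M] [Module R M] :
    ℕ ⥤ ModuleCat R :=
  Functor.ofSequence
    (X := fun t => ModuleCat.of R (Submodule.torsionBySet R M ((I ^ t : Ideal R) : Set R)))
    fun t => ModuleCat.ofHom
      (Submodule.inclusion (Submodule.torsionBySet_le_torsionBySet_of_subset
        (fun _ hx => Ideal.pow_le_pow_right (Nat.le_succ t) hx)))

/-- The `i`-th `I`-formal local homology module of `M` with respect to `J`:
`𝔉^I_{i,J}(M) = colim_t H^J_i(0 :_M I^t)`. -/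
def formalLocalHomology (I J : Ideal R) (i : ℕ) (M : Type) [AddCommGroup M] [Module R M] :
    ModuleCat R :=
  colimit (torsionDiagram R I M ⋙ localHomologyFunctor R J i)

end FLH

/-! Since `M` is Artinian, the chain `I^t M` stabilizes, so `I`-separatedness forces `I^n M = 0`.
Then `0 :_M I^t = M` for all `t ≥ n`: from `n` on, the direct system defining `𝔉^I_{i,J}(M)` is
constant with value `H^J_i(M)`, and the tail `t ≥ n` is cofinal in `ℕ`. -/

theorem IsArtinian.exists_pow_succ_smul_top_eq_iInf {R M : Type*} [CommSemiring R]
    [AddCommMonoid M] [Module R M] [IsArtinian R M] (I : Ideal R) :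
    ∃ k : ℕ, I ^ (k + 1) • (⊤ : Submodule R M) = ⨅ t : ℕ, I ^ (t + 1) • (⊤ : Submodule R M) :=
  let f : ℕ →o (Submodule R M)ᵒᵈ :=
    ⟨fun t => OrderDual.toDual (I ^ (t + 1) • ⊤),
      fun _ _ h => Submodule.smul_mono_left (Ideal.pow_le_pow_right (Nat.succ_le_succ h))⟩
  ⟨monotonicSequenceLimitIndex f, (WellFoundedGT.iSup_eq_monotonicSequenceLimit f).symm⟩

theorem Submodule.torsionBySet_eq_top_of_smul_top_eq_bot {R M : Type*} [CommSemiring R]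
    [AddCommMonoid M] [Module R M] {I : Ideal R} (h : I • (⊤ : Submodule R M) = ⊥) :
    torsionBySet R M (I : Set R) = ⊤ := by
  rwa [← Module.isTorsionBySet_iff_torsionBySet_eq_top,
    Module.isTorsionBySet_iff_subset_annihilator, ← Submodule.annihilator_top,
    SetLike.coe_subset_coe, Submodule.le_annihilator_iff]

instance Nat.const_add_functor_final (n : ℕ) : (monotone_id.const_add n).functor.Final :=
  (Monotone.final_functor_iff _).2 fun j => ⟨j, Nat.le_add_left j n⟩

def CategoryTheory.Limits.colimitIsoOfConstAddIsoConst {C : Type*} [Category C] {G : ℕ ⥤ C}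
    [HasColimit G] {n : ℕ} {X : C}
    (e : (monotone_id.const_add n).functor ⋙ G ≅ (Functor.const ℕ).obj X) : colimit G ≅ X :=
  (Functor.Final.colimitIso _ G).symm ≪≫ HasColimit.isoOfNatIso e ≪≫
    colimit.isoColimitCocone ⟨_, isColimitConstCocone ℕ X⟩

namespace FLH

variable {R : Type} [CommRing R] {I : Ideal R} {M : Type} [AddCommGroup M] [Module R M]

-- The shift is `n + ·` rather than `· + n` so that `n + (t + 1)` is definitionally `n + t + 1`,
-- which lets `Functor.ofSequence_map_homOfLE_succ` apply to the shifted diagram.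
def torsionDiagramConstAddIso {n : ℕ} (hn : I ^ n • (⊤ : Submodule R M) = ⊥) :
    (monotone_id.const_add n).functor ⋙ torsionDiagram R I M ≅
      (Functor.const ℕ).obj (ModuleCat.of R M) :=
  let e (t : ℕ) : ModuleCat.of R (Submodule.torsionBySet R M (I ^ (n + t) : Ideal R)) ≅
      ModuleCat.of R M :=
    (LinearEquiv.ofTop _ (Submodule.torsionBySet_eq_top_of_smul_top_eq_bot
      (eq_bot_mono (Submodule.smul_mono_left (Ideal.pow_le_pow_right (Nat.le_add_right n t)))
        hn))).toModuleIso
  NatIso.ofComponents e fun f =>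
    (NatTrans.ofSequence (F := (monotone_id.const_add n).functor ⋙ torsionDiagram R I M)
      (G := (Functor.const ℕ).obj (ModuleCat.of R M)) (fun t => (e t).hom) fun t => by
        erw [Functor.ofSequence_map_homOfLE_succ]
        rfl).naturality f

end FLH

theorem formalLocalHomology_of_separated_general (R : Type) [CommRing R]
    (I J : Ideal R) (M : Type) [AddCommGroup M] [Module R M] [IsArtinian R M]
    (hsep : (⨅ t : ℕ, ((I ^ (t + 1) : Ideal R) • (⊤ : Submodule R M))) = ⊥) :
    (∃ n : ℕ, 0 < n ∧ (I ^ n : Ideal R) • (⊤ : Submodule R M) = ⊥) ∧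
    ∀ i : ℕ, Nonempty (FLH.formalLocalHomology R I J i M ≅
      (FLH.localHomologyFunctor R J i).obj (ModuleCat.of R M)) := by
  obtain ⟨k, hk⟩ := IsArtinian.exists_pow_succ_smul_top_eq_iInf (M := M) I
  have hkill : I ^ (k + 1) • (⊤ : Submodule R M) = ⊥ := hk.trans hsep
  refine ⟨⟨k + 1, k.succ_pos, hkill⟩, fun i => ⟨colimitIsoOfConstAddIsoConst <|
    (Functor.associator _ _ _).symm ≪≫
      Functor.isoWhiskerRight (FLH.torsionDiagramConstAddIso hkill) _ ≪≫
      Functor.constComp _ _ _⟩⟩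

/-- If `M` is Artinian and `I`-separated, then some power of `I` kills `M`, and
`𝔉^I_{i,J}(M) ≅ H^J_i(M)` for all `i`. -/
theorem formalLocalHomology_of_separated (R : Type) [CommRing R] [IsNoetherianRing R]
    [IsLocalRing R] (I J : Ideal R) (M : Type) [AddCommGroup M] [Module R M] [IsArtinian R M]
    (hsep : (⨅ t : ℕ, ((I ^ (t + 1) : Ideal R) • (⊤ : Submodule R M))) = ⊥) :
    (∃ n : ℕ, 0 < n ∧ (I ^ n : Ideal R) • (⊤ : Submodule R M) = ⊥) ∧
    ∀ i : ℕ, Nonempty (FLH.formalLocalHomology R I J i M ≅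
      (FLH.localHomologyFunctor R J i).obj (ModuleCat.of R M)) :=
  formalLocalHomology_of_separated_general R I J M hsep
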